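/- arXiv:2405.04948 — 2 statements merged into one kernel-verified Lean document; each statement's English description precedes it below -/
import Mathlib

section
/- Let $\theta$ and $\omega$ be the constant-coefficient $(1,1)$-forms $\theta=\pi^*(dd^c|z|^2)$ and $\omega=dd^c(|z|^2+|w|^2)$ on $\mathbb{C}^n\times\mathbb{C}$, and fix $1\le m\le n$. If $\beta$ is a constant-coefficient real $(1,1)$-form on $\mathbb{C}^{n+1}$ satisfying $\beta\wedge\alpha_1\wedge\cdots\wedge\alpha_m\wedge\theta^{n-m}\ge 0$ for all $(\theta,m+1)$-positive $(1,1)$-forms $\alpha_1,\ldots,\alpha_m$, then $\beta$ is itself $(\theta,m+1)$-positive. -/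
noncomputable section

/-- The mixed determinant of `N` matrices of size `N`: up to a positive
normalizing constant, the coefficient of `α₁ ∧ ⋯ ∧ α_N` against the Euclidean
volume form, when each Hermitian matrix `A i` represents a constant-coefficient
real `(1,1)`-form. -/
def mixedDet {N : ℕ} (A : Fin N → Matrix (Fin N) (Fin N) ℂ) : ℂ :=
  (N.factorial : ℂ)⁻¹ * ∑ σ : Equiv.Perm (Fin N), (Matrix.of fun i j => A (σ j) i j).det

/-- The Hermitian matrix of the form `θ = π^*(dd^c|z|²)` on `ℂⁿ × ℂ`
(up to a positive constant): the identity in the `z`-directions, `0` in the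
`w`-direction. -/
def thetaMat (n : ℕ) : Matrix (Fin (n+1)) (Fin (n+1)) ℂ :=
  Matrix.diagonal (fun i => if (i : ℕ) < n then 1 else 0)

/-- `α` is a `(θ, m+1)`-positive `(1,1)`-form on `ℂⁿ × ℂ`:
`α^k ∧ ω^{m+1-k} ∧ θ^{n-m} ≥ 0` for all `1 ≤ k ≤ m+1`, where `ω = dd^c(|z|²+|w|²)`
corresponds to the identity matrix. -/
def ThetaPos (n m : ℕ) (α : Matrix (Fin (n+1)) (Fin (n+1)) ℂ) : Prop :=
  ∀ k : ℕ, 1 ≤ k → k ≤ m + 1 →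
    0 ≤ (mixedDet (fun i : Fin (n+1) =>
      if (i : ℕ) < k then α else if (i : ℕ) < m + 1 then (1 : Matrix _ _ ℂ) else thetaMat n)).re

/-! ### Auxiliary lemmas -/


/-!
Along the segment `γ s = (1 - s) ω + s β`, `0 ≤ s ≤ 1`, consider the numbers
`P_k(s) = Re (γ s ^ k ∧ ω ^ (m + 1 - k) ∧ θ ^ (n - m))`. Multilinearity in one slot gives
`P_{k+1}(s) = (1 - s) P_k(s) + s Re (β ∧ γ s ^ k ∧ ω ^ (m - k) ∧ θ ^ (n - m))`, and when `γ s` is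
`(θ, m+1)`-positive the last term is nonnegative by hypothesis (take `α = (γ s, …, γ s, ω, …, ω)`).
Hence for `s < 1` positivity of `γ s` upgrades to `P_k(s) ≥ (1 - s)^k P_0 > 0`: the positive
parameters form a nonempty relatively clopen subset of `[0, 1)`, so all of `[0, 1)`, and `s = 1`
follows by continuity.
-/

open Function Matrix

section MixedDet

variable {N : ℕ}

theorem mixedDet_comp_perm (A : Fin N → Matrix (Fin N) (Fin N) ℂ) (e : Equiv.Perm (Fin N)) :
    mixedDet (A ∘ e) = mixedDet A := by
  unfold mixedDet
  congr 1
  exact Fintype.sum_equiv (Equiv.mulLeft e) _ _ fun σ => rfl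

theorem of_update_eq_updateCol (A : Fin N → Matrix (Fin N) (Fin N) ℂ) (p : Fin N)
    (X : Matrix (Fin N) (Fin N) ℂ) (σ : Equiv.Perm (Fin N)) :
    (of fun i j => update A p X (σ j) i j) =
      (of fun i j => A (σ j) i j).updateCol (σ⁻¹ p) (fun i => X i (σ⁻¹ p)) := by
  ext i j
  rw [Equiv.Perm.inv_def]
  by_cases hj : j = σ.symm p
  · subst hj
    simp
  · have hσj : σ j ≠ p := by
      rintro rfl
      simp at hj
    simp [hσj, hj]

theorem mixedDet_update_add_smul (A : Fin N → Matrix (Fin N) (Fin N) ℂ) (p : Fin N)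
    (X Y : Matrix (Fin N) (Fin N) ℂ) (a b : ℂ) :
    mixedDet (update A p (a • X + b • Y)) =
      a * mixedDet (update A p X) + b * mixedDet (update A p Y) := by
  have hcol : ∀ (M : Matrix (Fin N) (Fin N) ℂ) (q : Fin N),
      (M.updateCol q fun i => (a • X + b • Y) i q).det =
        a * (M.updateCol q fun i => X i q).det + b * (M.updateCol q fun i => Y i q).det := by
    intro M q
    rw [← det_updateCol_smul, ← det_updateCol_smul, ← det_updateCol_add]
    rfl
  simp only [mixedDet, of_update_eq_updateCol, hcol, Finset.sum_add_distrib, ← Finset.mul_sum]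
  ring

theorem continuous_mixedDet {X : Type*} [TopologicalSpace X]
    {A : X → Fin N → Matrix (Fin N) (Fin N) ℂ} (hA : ∀ i, Continuous fun x => A x i) :
    Continuous fun x => mixedDet (A x) :=
  continuous_const.mul <| continuous_finsetSum _ fun σ _ =>
    (continuous_matrix fun i j => (continuous_apply_apply i j).comp (hA (σ j))).matrix_det

theorem mixedDet_diagonal (d : Fin N → Fin N → ℂ) :
    mixedDet (fun i => diagonal (d i)) =
      (N.factorial : ℂ)⁻¹ * ∑ σ : Equiv.Perm (Fin N), ∏ j, d (σ j) j := by
  unfold mixedDet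
  congr 1
  refine Finset.sum_congr rfl fun σ _ => ?_
  rw [← det_diagonal]
  congr 1
  ext i j
  by_cases hij : i = j <;> simp [diagonal_apply, hij]

theorem re_mixedDet_diagonal_pos (d : Fin N → Fin N → ℝ) (hd : ∀ i j, 0 ≤ d i j)
    (σ : Equiv.Perm (Fin N)) (hσ : ∀ j, 0 < d (σ j) j) :
    0 < (mixedDet fun i => diagonal fun j => (d i j : ℂ)).re := by
  have hreal : mixedDet (fun i => diagonal fun j => (d i j : ℂ)) =
      (((N.factorial : ℝ)⁻¹ * ∑ τ : Equiv.Perm (Fin N), ∏ j, d (τ j) j : ℝ) : ℂ) := by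
    rw [mixedDet_diagonal]
    push_cast
    rfl
  rw [hreal, Complex.ofReal_re]
  exact mul_pos (by positivity) <| Finset.sum_pos'
    (fun τ _ => Finset.prod_nonneg fun j _ => hd _ _)
    ⟨σ, Finset.mem_univ _, Finset.prod_pos fun j _ => hσ j⟩

end MixedDet

theorem nonneg_of_nonneg_imp_pos {ι : Type*} {s : Finset ι} {f : ι → ℝ → ℝ} {a b : ℝ}
    (hab : a < b) (hf : ∀ i, Continuous (f i)) (ha : ∀ i ∈ s, 0 < f i a)
    (hstep : ∀ t ∈ Set.Ico a b, (∀ i ∈ s, 0 ≤ f i t) → ∀ i ∈ s, 0 < f i t) :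
    ∀ i ∈ s, 0 ≤ f i b := by
  set U := ⋂ i ∈ s, {t | 0 < f i t}
  set S := ⋂ i ∈ s, {t | 0 ≤ f i t}
  have hU : IsOpen U := isOpen_biInter_finset fun i _ => isOpen_lt continuous_const (hf i)
  have hUS : closure U ⊆ S :=
    closure_minimal (Set.iInter₂_mono fun _ _ => Set.ofPred_subset_ofPred.2 fun _ => le_of_lt)
      (isClosed_biInter fun i _ => isClosed_le continuous_const (hf i))
  have hIco : Set.Ico a b ⊆ U := by
    refine isPreconnected_Ico.subset_of_closure_inter_subset hU
      ⟨a, Set.left_mem_Ico.2 hab, Set.mem_iInter₂.2 ha⟩ fun t ⟨htU, ht⟩ => ?_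
    exact Set.mem_iInter₂.2 (hstep t ht (Set.mem_iInter₂.1 (hUS htU)))
  have hb : b ∈ closure (Set.Ico a b) := by
    rw [closure_Ico hab.ne]
    exact Set.right_mem_Icc.2 hab.le
  exact Set.mem_iInter₂.1 (hUS (closure_mono hIco hb))

section Theta

variable {n m : ℕ}

/-- `α ^ k ∧ ω ^ (m + 1 - k) ∧ θ ^ (n - m)`, for `k ≤ m + 1`. -/
def thetaArr (n m : ℕ) (α : Matrix (Fin (n+1)) (Fin (n+1)) ℂ) (k : ℕ) :
    Fin (n+1) → Matrix (Fin (n+1)) (Fin (n+1)) ℂ :=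
  fun i => if (i : ℕ) < k then α else if (i : ℕ) < m + 1 then 1 else thetaMat n

theorem thetaPos_iff {α : Matrix (Fin (n+1)) (Fin (n+1)) ℂ} :
    ThetaPos n m α ↔ ∀ k, 1 ≤ k → k ≤ m + 1 → 0 ≤ (mixedDet (thetaArr n m α k)).re :=
  Iff.rfl

/-- `β ∧ α₁ ∧ ⋯ ∧ α_m ∧ θ ^ (n - m)`. -/
def dualArr (n m : ℕ) (β : Matrix (Fin (n+1)) (Fin (n+1)) ℂ)
    (α : Fin m → Matrix (Fin (n+1)) (Fin (n+1)) ℂ) :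
    Fin (n+1) → Matrix (Fin (n+1)) (Fin (n+1)) ℂ :=
  fun i => if h0 : (i : ℕ) = 0 then β
    else if h1 : (i : ℕ) ≤ m then α ⟨(i : ℕ) - 1, Nat.sub_one_lt_of_le (Nat.pos_of_ne_zero h0) h1⟩
    else thetaMat n

def ThetaDualPos (n m : ℕ) (β : Matrix (Fin (n+1)) (Fin (n+1)) ℂ) : Prop :=
  ∀ α : Fin m → Matrix (Fin (n+1)) (Fin (n+1)) ℂ,
    (∀ i, (α i).IsHermitian) → (∀ i, ThetaPos n m (α i)) → 0 ≤ (mixedDet (dualArr n m β α)).re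

theorem re_mixedDet_thetaArr_zero_pos (α : Matrix (Fin (n+1)) (Fin (n+1)) ℂ) :
    0 < (mixedDet (thetaArr n m α 0)).re := by
  have hdiag : thetaArr n m α 0 = fun i : Fin (n+1) => diagonal fun j : Fin (n+1) =>
      ((if (i : ℕ) < m + 1 ∨ (j : ℕ) < n then 1 else 0 : ℝ) : ℂ) := by
    funext i
    by_cases hi : (i : ℕ) < m + 1
    · simp [thetaArr, hi]
    · simp [thetaArr, hi, thetaMat, apply_ite Complex.ofReal]
  rw [hdiag]
  refine re_mixedDet_diagonal_pos _ (fun i j => by positivity) (Equiv.swap 0 (Fin.last n))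
    fun j => ?_
  by_cases hj : j = Fin.last n
  · simp [hj]
  · simp [Equiv.swap_apply_def, Fin.val_lt_last hj]

theorem thetaArr_one {k : ℕ} (hk : k ≤ m + 1) : thetaArr n m 1 k = thetaArr n m 1 0 := by
  funext i
  simp only [thetaArr]
  split_ifs <;> first | rfl | omega

theorem thetaPos_one : ThetaPos n m 1 := fun _ _ hk =>
  (thetaArr_one (n := n) hk ▸ re_mixedDet_thetaArr_zero_pos 1).le

theorem mixedDet_thetaArr_succ {k : ℕ} (hk : k ≤ m) (hmn : m ≤ n)
    (X : Matrix (Fin (n+1)) (Fin (n+1)) ℂ) (a b : ℂ) :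
    mixedDet (thetaArr n m (a • 1 + b • X) (k + 1)) =
      a * mixedDet (thetaArr n m (a • 1 + b • X) k) +
        b * mixedDet (dualArr n m X fun j => if (j : ℕ) < k then a • 1 + b • X else 1) := by
  set A := thetaArr n m (a • 1 + b • X) (k + 1)
  set p : Fin (n+1) := ⟨k, by omega⟩
  have hA : A = update A p (a • 1 + b • X) := by
    have hAp : A p = a • 1 + b • X := by simp [A, p, thetaArr]
    rw [← hAp, update_eq_self]
  have hone : update A p 1 = thetaArr n m (a • 1 + b • X) k := by
    funext i
    rw [update_apply]
    simp only [A, p, thetaArr, Fin.ext_iff]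
    split_ifs <;> first | rfl | omega
  have hX : update A p X ∘ Equiv.swap 0 p =
      dualArr n m X fun j => if (j : ℕ) < k then a • 1 + b • X else 1 := by
    funext i
    simp only [Function.comp_apply, Equiv.swap_apply_def, update_apply, A, p, thetaArr, dualArr,
      Fin.ext_iff, apply_ite Fin.val, Fin.val_zero]
    split_ifs <;> first | rfl | omega
  rw [hA, mixedDet_update_add_smul, hone, ← hX, mixedDet_comp_perm]

theorem lineMap_one_eq (β : Matrix (Fin (n+1)) (Fin (n+1)) ℂ) (s : ℝ) :
    AffineMap.lineMap 1 β s = ((1 - s : ℝ) : ℂ) • 1 + (s : ℂ) • β := by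
  rw [AffineMap.lineMap_apply_module, Complex.coe_smul, Complex.coe_smul]

theorem Matrix.IsHermitian.lineMap_one {β : Matrix (Fin (n+1)) (Fin (n+1)) ℂ} (hβ : β.IsHermitian)
    (s : ℝ) : (AffineMap.lineMap 1 β s).IsHermitian := by
  rw [AffineMap.lineMap_apply_module]
  exact (isHermitian_one.smul (IsSelfAdjoint.all _)).add (hβ.smul (IsSelfAdjoint.all _))

theorem pow_mul_le_re_mixedDet_thetaArr (hmn : m ≤ n) {β : Matrix (Fin (n+1)) (Fin (n+1)) ℂ}
    (hβ : β.IsHermitian) (hdual : ThetaDualPos n m β) {s : ℝ} (hs0 : 0 ≤ s) (hs1 : s ≤ 1)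
    (hpos : ThetaPos n m (AffineMap.lineMap 1 β s)) {k : ℕ} (hk : k ≤ m + 1) :
    (1 - s) ^ k * (mixedDet (thetaArr n m (AffineMap.lineMap 1 β s) 0)).re ≤
      (mixedDet (thetaArr n m (AffineMap.lineMap 1 β s) k)).re := by
  induction k with
  | zero => simp
  | succ k ih =>
    have hdualk : 0 ≤ (mixedDet (dualArr n m β fun j =>
        if (j : ℕ) < k then AffineMap.lineMap 1 β s else 1)).re := by
      refine hdual _ (fun j => ?_) (fun j => ?_) <;> split_ifs
      exacts [hβ.lineMap_one s, isHermitian_one, hpos, thetaPos_one]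
    have hrec := mixedDet_thetaArr_succ (k := k) (by omega) hmn β ((1 - s : ℝ) : ℂ) (s : ℂ)
    rw [← lineMap_one_eq] at hrec
    rw [hrec, Complex.add_re, Complex.re_ofReal_mul, Complex.re_ofReal_mul, pow_succ', mul_assoc]
    exact le_add_of_le_of_nonneg (mul_le_mul_of_nonneg_left (ih (by omega)) (by linarith))
      (mul_nonneg hs0 hdualk)

end Theta

/-- Gårding-type characterization, Lemma `GC: Lem`: if
`β ∧ α₁ ∧ ⋯ ∧ α_m ∧ θ^{n-m} ≥ 0` for all `(θ, m+1)`-positive forms `α₁, …, α_m`,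
then `β` is `(θ, m+1)`-positive. -/
theorem kiselman_stmt2 (n m : ℕ) (hmn : m ≤ n)
    (β : Matrix (Fin (n+1)) (Fin (n+1)) ℂ) (hβ : β.IsHermitian)
    (h : ∀ α : Fin m → Matrix (Fin (n+1)) (Fin (n+1)) ℂ,
      (∀ i, (α i).IsHermitian) → (∀ i, ThetaPos n m (α i)) →
      0 ≤ (mixedDet (fun i : Fin (n+1) =>
        if h0 : (i : ℕ) = 0 then β
        else if h1 : (i : ℕ) ≤ m then α ⟨(i : ℕ) - 1, by omega⟩
        else thetaMat n)).re) :
    ThetaPos n m β := by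
  let P : ℕ → ℝ → ℝ := fun k s => (mixedDet (thetaArr n m (AffineMap.lineMap 1 β s) k)).re
  have hP : ∀ k, Continuous (P k) := fun k =>
    Complex.continuous_re.comp <| continuous_mixedDet fun i => by
      unfold thetaArr
      split_ifs
      exacts [AffineMap.lineMap_continuous, continuous_const, continuous_const]
  have hP0 : ∀ k ∈ Finset.Icc 1 (m + 1), 0 < P k 0 := fun k hk => by
    simpa [P, thetaArr_one (Finset.mem_Icc.1 hk).2] using
      re_mixedDet_thetaArr_zero_pos (n := n) (m := m) 1
  have hstep : ∀ s ∈ Set.Ico (0 : ℝ) 1, (∀ k ∈ Finset.Icc 1 (m + 1), 0 ≤ P k s) →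
      ∀ k ∈ Finset.Icc 1 (m + 1), 0 < P k s := fun s ⟨hs0, hs1⟩ hpos k hk =>
    (mul_pos (pow_pos (by linarith) k) (re_mixedDet_thetaArr_zero_pos _)).trans_le
      (pow_mul_le_re_mixedDet_thetaArr hmn hβ h hs0 hs1.le
        (fun j hj1 hj2 => hpos j (Finset.mem_Icc.2 ⟨hj1, hj2⟩)) (Finset.mem_Icc.1 hk).2)
  refine thetaPos_iff.2 fun k hk1 hk2 => ?_
  simpa only [P, AffineMap.lineMap_apply_one] using
    nonneg_of_nonneg_imp_pos zero_lt_one hP hP0 hstep k (Finset.mem_Icc.2 ⟨hk1, hk2⟩)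

end
end

section
/- With $\theta=\pi^*(dd^c|z|^2)$ and $\omega=dd^c(|z|^2+|w|^2)$ on $\mathbb{C}^{n+1}=\mathbb{C}^n_z\times\mathbb{C}_w$, a constant-coefficient real $(1,1)$-form $\alpha$ on $\mathbb{C}^n$ has $(\theta,m+1)$-positive pullback $\pi^*\alpha$ if and only if $\alpha$ is $m$-positive on $\mathbb{C}^n$, i.e. $\alpha^k\wedge(dd^c|z|^2)^{n-k}\ge 0$ for all $1\le k\le m$. -/
noncomputable section

/-- The pullback `π^*α` of a constant `(1,1)`-form on `ℂⁿ` under the projection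
`π : ℂⁿ × ℂ → ℂⁿ`: the matrix extended by zeros in the `w`-direction. -/
def pullbackMat (n : ℕ) (α : Matrix (Fin n) (Fin n) ℂ) :
    Matrix (Fin (n+1)) (Fin (n+1)) ℂ :=
  Matrix.of fun i j =>
    if h : (i : ℕ) < n ∧ (j : ℕ) < n then α ⟨(i : ℕ), h.1⟩ ⟨(j : ℕ), h.2⟩ else 0

/-- `α` is an `m`-positive `(1,1)`-form on `ℂⁿ`:
`α^k ∧ (dd^c|z|²)^{n-k} ≥ 0` for all `1 ≤ k ≤ m`. -/
def MPos (n m : ℕ) (α : Matrix (Fin n) (Fin n) ℂ) : Prop :=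
  ∀ k : ℕ, 1 ≤ k → k ≤ m →
    0 ≤ (mixedDet (fun i : Fin n =>
      if (i : ℕ) < k then α else (1 : Matrix _ _ ℂ))).re

namespace KisAux

open Equiv Matrix Fin

variable {n : ℕ}

lemma pullback_castSucc (α : Matrix (Fin n) (Fin n) ℂ) (i j : Fin n) :
    pullbackMat n α (castSucc i) (castSucc j) = α i j := by
  simp [pullbackMat, i.isLt, j.isLt]

lemma pullback_last_col (α : Matrix (Fin n) (Fin n) ℂ) (i : Fin (n+1)) :
    pullbackMat n α i (Fin.last n) = 0 := by
  simp [pullbackMat]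

lemma theta_last_col (i : Fin (n+1)) : thetaMat n i (Fin.last n) = 0 := by
  rcases eq_or_ne i (Fin.last n) with h | h
  · simp [thetaMat, h, Matrix.diagonal_apply_eq]
  · simp [thetaMat, Matrix.diagonal_apply_ne _ h]

lemma theta_castSucc (i j : Fin n) :
    thetaMat n (castSucc i) (castSucc j) = (1 : Matrix (Fin n) (Fin n) ℂ) i j := by
  rcases eq_or_ne i j with h | h
  · subst h; simp [thetaMat, Matrix.diagonal_apply_eq, i.isLt, Matrix.one_apply_eq]
  · have : castSucc i ≠ castSucc j := fun hc => h (Fin.castSucc_injective _ hc)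
    simp [thetaMat, Matrix.diagonal_apply_ne _ this, Matrix.one_apply_ne h]

lemma one_castSucc (i j : Fin n) :
    (1 : Matrix (Fin (n+1)) (Fin (n+1)) ℂ) (castSucc i) (castSucc j)
      = (1 : Matrix (Fin n) (Fin n) ℂ) i j := by
  rcases eq_or_ne i j with h | h
  · subst h; simp [Matrix.one_apply_eq]
  · have : castSucc i ≠ castSucc j := fun hc => h (Fin.castSucc_injective _ hc)
    simp [Matrix.one_apply_ne h, Matrix.one_apply_ne this]

lemma one_last_col (i : Fin (n+1)) :
    (1 : Matrix (Fin (n+1)) (Fin (n+1)) ℂ) i (Fin.last n)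
      = if i = Fin.last n then 1 else 0 := Matrix.one_apply

lemma det_last_col (M : Matrix (Fin (n+1)) (Fin (n+1)) ℂ)
    (h : ∀ i, M i (Fin.last n) = if i = Fin.last n then 1 else 0) :
    M.det = (M.submatrix castSucc castSucc).det := by
  rw [Matrix.det_succ_column M (Fin.last n), Finset.sum_eq_single (Fin.last n)]
  · rw [h, if_pos rfl, Fin.succAbove_last]
    have hval : ((Fin.last n : Fin (n+1)) : ℕ) + ((Fin.last n : Fin (n+1)) : ℕ) = n + n := rfl
    rw [hval, (Even.add_self n).neg_one_pow]
    ring_nf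
  · intro i _ hi
    rw [h, if_neg hi]; ring
  · simp

/-- The decomposition of a permutation of `Fin (n+1)` by its value at `last n`. -/
def E (n : ℕ) : Perm (Fin (n+1)) ≃ Fin (n+1) × Perm (Fin n) :=
  ((Equiv.permCongr (finSuccEquiv' (Fin.last n))).trans Equiv.Perm.decomposeOption).trans
    (Equiv.prodCongr (finSuccEquiv' (Fin.last n)).symm (Equiv.refl _))

lemma E_symm_apply_last (a : Fin (n+1)) (τ : Perm (Fin n)) :
    (E n).symm (a, τ) (Fin.last n) = a := by
  simp only [E, Equiv.symm_trans_apply, Equiv.prodCongr_symm, Equiv.prodCongr_apply,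
    Equiv.symm_symm, Equiv.refl_symm, Equiv.refl_apply, Prod.map,
    Equiv.permCongr_symm, Equiv.permCongr_apply, Equiv.Perm.decomposeOption_symm_apply,
    finSuccEquiv'_at]
  rw [Equiv.Perm.mul_apply]
  simp

lemma E_symm_apply_castSucc (a : Fin (n+1)) (τ : Perm (Fin n)) (j : Fin n) :
    (E n).symm (a, τ) (castSucc j)
      = if castSucc (τ j) = a then Fin.last n else castSucc (τ j) := by
  have hfj : finSuccEquiv' (Fin.last n) (castSucc j) = some j := by
    rw [← Fin.succAbove_last, finSuccEquiv'_succAbove]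
  simp only [E, Equiv.symm_trans_apply, Equiv.prodCongr_symm, Equiv.prodCongr_apply,
    Equiv.symm_symm, Equiv.refl_symm, Equiv.refl_apply, Prod.map,
    Equiv.permCongr_symm, Equiv.permCongr_apply, Equiv.Perm.decomposeOption_symm_apply]
  rw [hfj, Equiv.Perm.mul_apply]
  simp only [Equiv.optionCongr_apply, Option.map_some]
  rcases eq_or_ne (castSucc (τ j)) a with h | h
  · rw [if_pos h, ← h, ← Fin.succAbove_last, finSuccEquiv'_succAbove,
      Equiv.swap_apply_right, finSuccEquiv'_symm_none]
  · rw [if_neg h]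
    have h1 : (some (τ j) : Option (Fin n)) ≠ none := by simp
    have h2 : (some (τ j) : Option (Fin n)) ≠ finSuccEquiv' (Fin.last n) a := by
      intro hc
      apply h
      have := congrArg (finSuccEquiv' (Fin.last n)).symm hc
      rw [Equiv.symm_apply_apply, finSuccEquiv'_symm_some, Fin.succAbove_last] at this
      exact this
    rw [Equiv.swap_apply_of_ne_of_ne h1 h2, finSuccEquiv'_symm_some, Fin.succAbove_last]

/-- The key identity. -/
lemma key (n m k : ℕ) (hk : k ≤ m + 1) (hmn : m ≤ n) (α : Matrix (Fin n) (Fin n) ℂ) :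
    mixedDet (fun i : Fin (n+1) =>
      if (i : ℕ) < k then pullbackMat n α
      else if (i : ℕ) < m + 1 then (1 : Matrix _ _ ℂ) else thetaMat n)
    = ((((m + 1 - k : ℕ) : ℝ) / ((n + 1 : ℕ) : ℝ) : ℝ) : ℂ) *
      mixedDet (fun i : Fin n => if (i : ℕ) < k then α else (1 : Matrix _ _ ℂ)) := by
  set A : Fin (n+1) → Matrix (Fin (n+1)) (Fin (n+1)) ℂ := fun i =>
    if (i : ℕ) < k then pullbackMat n α
    else if (i : ℕ) < m + 1 then (1 : Matrix _ _ ℂ) else thetaMat n with hA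
  set B : Fin n → Matrix (Fin n) (Fin n) ℂ := fun i =>
    if (i : ℕ) < k then α else (1 : Matrix _ _ ℂ) with hB
  -- the last column of A a is zero when a is an α-index or a θ-index
  have hAcol : ∀ a : Fin (n+1), ¬(k ≤ (a : ℕ) ∧ (a : ℕ) < m + 1) →
      ∀ i, A a i (Fin.last n) = 0 := by
    intro a ha i
    rcases lt_or_ge (a : ℕ) k with h | h
    · simp only [hA, if_pos h]; exact pullback_last_col α i
    · have h2 : ¬ (a : ℕ) < m + 1 := fun hc => ha ⟨h, hc⟩
      simp only [hA, if_neg (not_lt.mpr h), if_neg h2]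
      exact theta_last_col i
  -- main per-permutation computation
  have hdet : ∀ a : Fin (n+1), ∀ τ : Perm (Fin n),
      (Matrix.of fun i j => A ((E n).symm (a, τ) j) i j).det
        = if k ≤ (a : ℕ) ∧ (a : ℕ) < m + 1
          then (Matrix.of fun i j => B (τ j) i j).det else 0 := by
    intro a τ
    by_cases ha : k ≤ (a : ℕ) ∧ (a : ℕ) < m + 1
    · rw [if_pos ha]
      have hAa : A a = 1 := by
        simp only [hA, if_neg (not_lt.mpr ha.1), if_pos ha.2]
      have hcol : ∀ i, (Matrix.of fun i j => A ((E n).symm (a, τ) j) i j) i (Fin.last n)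
          = if i = Fin.last n then 1 else 0 := by
        intro i
        simp only [Matrix.of_apply]
        rw [E_symm_apply_last, hAa, one_last_col]
      rw [det_last_col _ hcol]
      congr 1
      ext i j
      simp only [Matrix.submatrix_apply, Matrix.of_apply]
      rw [E_symm_apply_castSucc]
      rcases eq_or_ne (castSucc (τ j)) a with h | h
      · rw [if_pos h]
        have hτv : ((τ j : Fin n) : ℕ) = (a : ℕ) := by rw [← h]; rfl
        have h1 : ¬ ((Fin.last n : Fin (n+1)) : ℕ) < k := by
          simp only [Fin.val_last, not_lt]
          exact le_trans ha.1 (by rw [← hτv]; exact le_of_lt (τ j).isLt)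
        have hBτ : B (τ j) = 1 := by
          simp only [hB, if_neg (not_lt.mpr (hτv ▸ ha.1))]
        rw [hBτ]
        simp only [hA, if_neg h1]
        by_cases h2 : ((Fin.last n : Fin (n+1)) : ℕ) < m + 1
        · rw [if_pos h2]; exact one_castSucc i j
        · rw [if_neg h2]; exact theta_castSucc i j
      · rw [if_neg h]
        have hv : ((castSucc (τ j) : Fin (n+1)) : ℕ) = ((τ j : Fin n) : ℕ) := rfl
        by_cases h3 : ((τ j : Fin n) : ℕ) < k
        · have hBτ : B (τ j) = α := by simp only [hB, if_pos h3]
          rw [hBτ]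
          simp only [hA, hv, if_pos h3]
          exact pullback_castSucc α i j
        · have hBτ : B (τ j) = 1 := by simp only [hB, if_neg h3]
          rw [hBτ]
          simp only [hA, hv, if_neg h3]
          by_cases h4 : ((τ j : Fin n) : ℕ) < m + 1
          · rw [if_pos h4]; exact one_castSucc i j
          · rw [if_neg h4]; exact theta_castSucc i j
    · rw [if_neg ha]
      apply Matrix.det_eq_zero_of_column_eq_zero (Fin.last n)
      intro i
      simp only [Matrix.of_apply]
      rw [E_symm_apply_last]
      exact hAcol a ha i
  -- count of good indices
  have hcount : (∑ a : Fin (n+1), if k ≤ (a : ℕ) ∧ (a : ℕ) < m + 1 then (1 : ℂ) else 0)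
      = ((m + 1 - k : ℕ) : ℂ) := by
    rw [Fin.sum_univ_eq_sum_range (fun i => if k ≤ i ∧ i < m + 1 then (1 : ℂ) else 0)]
    have hrw : ∀ i ∈ Finset.range (n+1),
        (if k ≤ i ∧ i < m + 1 then (1 : ℂ) else 0)
          = if i ∈ Finset.Ico k (m+1) then (1 : ℂ) else 0 := by
      intro i _
      simp [Finset.mem_Ico]
    rw [Finset.sum_congr rfl hrw, Finset.sum_ite_mem]
    have hsub : Finset.Ico k (m+1) ⊆ Finset.range (n+1) := by
      intro x hx
      rw [Finset.mem_range]
      exact lt_of_lt_of_le (Finset.mem_Ico.mp hx).2 (by omega)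
    rw [Finset.inter_eq_right.mpr hsub, Finset.sum_const, Nat.card_Ico]
    simp
  -- assemble
  have hsum : (∑ σ : Perm (Fin (n+1)), (Matrix.of fun i j => A (σ j) i j).det)
      = ((m + 1 - k : ℕ) : ℂ) * ∑ τ : Perm (Fin n), (Matrix.of fun i j => B (τ j) i j).det := by
    rw [← Equiv.sum_comp (E n).symm (fun σ => (Matrix.of fun i j => A (σ j) i j).det),
      Fintype.sum_prod_type]
    calc (∑ a : Fin (n+1), ∑ τ : Perm (Fin n),
          (Matrix.of fun i j => A ((E n).symm (a, τ) j) i j).det)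
        = ∑ a : Fin (n+1), ∑ τ : Perm (Fin n),
            (if k ≤ (a : ℕ) ∧ (a : ℕ) < m + 1
              then (Matrix.of fun i j => B (τ j) i j).det else 0) := by
          refine Finset.sum_congr rfl fun a _ => Finset.sum_congr rfl fun τ _ => hdet a τ
      _ = ∑ a : Fin (n+1), (if k ≤ (a : ℕ) ∧ (a : ℕ) < m + 1 then (1:ℂ) else 0) *
            ∑ τ : Perm (Fin n), (Matrix.of fun i j => B (τ j) i j).det := by
          refine Finset.sum_congr rfl fun a _ => ?_
          by_cases ha : k ≤ (a : ℕ) ∧ (a : ℕ) < m + 1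
          · simp [ha]
          · simp [ha]
      _ = _ := by rw [← Finset.sum_mul, hcount]
  show ((n+1).factorial : ℂ)⁻¹ * ∑ σ : Perm (Fin (n+1)), (Matrix.of fun i j => A (σ j) i j).det
      = _ * ((n.factorial : ℂ)⁻¹ * ∑ τ : Perm (Fin n), (Matrix.of fun i j => B (τ j) i j).det)
  rw [hsum]
  have hfac : ((n+1).factorial : ℂ) = ((n+1 : ℕ) : ℂ) * (n.factorial : ℂ) := by
    rw [Nat.factorial_succ]; push_cast; ring
  have h1 : ((n+1 : ℕ) : ℂ) ≠ 0 := by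
    simp [Nat.cast_add]
    exact_mod_cast Nat.succ_ne_zero n
  have h2 : (n.factorial : ℂ) ≠ 0 := by
    exact_mod_cast Nat.cast_ne_zero.mpr n.factorial_ne_zero
  rw [hfac, mul_inv]
  push_cast
  field_simp

end KisAux

/-- a constant-coefficient real `(1,1)`-form `α` on `ℂⁿ` has
`(θ, m+1)`-positive pullback `π^*α` if and only if `α` is `m`-positive. -/
theorem kiselman_stmt3 (n m : ℕ) (hm1 : 1 ≤ m) (hmn : m ≤ n)
    (α : Matrix (Fin n) (Fin n) ℂ) (hα : α.IsHermitian) :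
    ThetaPos n m (pullbackMat n α) ↔ MPos n m α := by
  constructor
  · intro h k hk1 hk2
    have hk' : k ≤ m + 1 := by omega
    have h0 := h k hk1 hk'
    rw [KisAux.key n m k hk' hmn α, Complex.re_ofReal_mul] at h0
    have hpos : (0 : ℝ) < ((m + 1 - k : ℕ) : ℝ) / ((n + 1 : ℕ) : ℝ) := by
      apply div_pos
      · exact_mod_cast Nat.sub_pos_of_lt (by omega)
      · exact_mod_cast Nat.succ_pos n
    exact (mul_nonneg_iff_of_pos_left hpos).mp h0
  · intro h k hk1 hk2
    rw [KisAux.key n m k hk2 hmn α, Complex.re_ofReal_mul]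
    rcases Nat.lt_or_ge k (m+1) with hlt | hge
    · apply mul_nonneg
      · positivity
      · exact h k hk1 (by omega)
    · have : m + 1 - k = 0 := by omega
      rw [this]
      simp

end
end
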